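/- Let d ≥ 1 and 1 ≤ p < ∞. There exist constants c, C > 0, depending only on d and p, such that for every h ∈ (0,1/2): (i) c |log h| ≤ ∫_{ℝ^d} K_h(x) dx ≤ C |log h|; and (ii) setting K̃_h = K_h / ‖K_h‖_{L¹}, for every u ∈ L^p(ℝ^d): ‖ u − K̃_h ⋆ u ‖_{L^p(ℝ^d)}^p ≤ C |log h|^{−1} ∫∫_{ℝ^{2d}} K_h(x−y) |u(x) − u(y)|^p dx dy. -/

import Mathlib

open MeasureTheory Filter

/-- The kernel `K_h(x) = (|x|+h)^{-d}` for `|x| ≤ 1`, `0` otherwise. -/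
noncomputable def Kh (d : ℕ) (h : ℝ) (x : EuclideanSpace ℝ (Fin d)) : ℝ :=
  if ‖x‖ ≤ 1 then ((‖x‖ + h) ^ d)⁻¹ else 0

open Set
open scoped ENNReal

/-!
Polar coordinates reduce `∫ K_h` to `d |B₁| ∫₀¹ r^{d-1} (r+h)^{-d} dr`; the integrand lies between
`2^{-d} r⁻¹` on `(h, 1]` and `(r+h)⁻¹` on `(0, 1]`, whose integrals are `2^{-d} log h⁻¹` and
`log ((1+h)/h) ≤ 2 log h⁻¹`. For (ii), `u(x) - K̃_h ⋆ u(x) = ∫ K̃_h(x-y) (u(x) - u(y)) dy` because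
`K̃_h(x - ·)` is a probability density, so Jensen's inequality for this density bounds its `p`-th
power by `‖K_h‖₁⁻¹ ∫ K_h(x-y) |u(x) - u(y)|^p dy`; integrating in `x` and using the lower mass
bound gives the estimate.
-/

section Jensen

variable {α : Type*} [MeasurableSpace α] {μ : Measure α}

theorem rpow_lintegral_le_lintegral_rpow [IsProbabilityMeasure μ] {p : ℝ} (hp : 1 ≤ p)
    {g : α → ℝ≥0∞} (hg : AEMeasurable g μ) :
    (∫⁻ a, g a ∂μ) ^ p ≤ ∫⁻ a, g a ^ p ∂μ := by
  have h := eLpNorm'_le_eLpNorm'_of_exponent_le one_pos hp μ hg.aestronglyMeasurable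
  rw [← ENNReal.rpow_le_rpow_iff (zero_lt_one.trans_le hp),
    ← lintegral_rpow_enorm_eq_rpow_eLpNorm' (zero_lt_one.trans_le hp)] at h
  simpa [eLpNorm'] using h

theorem rpow_lintegral_mul_le_lintegral_mul_rpow {p : ℝ} (hp : 1 ≤ p) {w g : α → ℝ≥0∞}
    (hw : AEMeasurable w μ) (hg : AEMeasurable g μ) (hw1 : ∫⁻ a, w a ∂μ = 1) :
    (∫⁻ a, w a * g a ∂μ) ^ p ≤ ∫⁻ a, w a * g a ^ p ∂μ := by
  have : IsProbabilityMeasure (μ.withDensity w) :=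
    ⟨by rwa [withDensity_apply _ MeasurableSet.univ, Measure.restrict_univ]⟩
  simpa only [lintegral_withDensity_eq_lintegral_mul₀ hw hg,
    lintegral_withDensity_eq_lintegral_mul₀ hw (hg.pow_const p), Pi.mul_apply]
    using rpow_lintegral_le_lintegral_rpow hp (hg.mono_ac (withDensity_absolutelyContinuous μ w))

theorem enorm_sub_integral_mul_rpow_le {p : ℝ} (hp : 1 ≤ p) {w f : α → ℝ} (hw0 : 0 ≤ w)
    (hw : Integrable w μ) (hw1 : ∫ a, w a ∂μ = 1) (hwf : Integrable (fun a => w a * f a) μ)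
    (hf : AEMeasurable f μ) (c : ℝ) :
    ‖c - ∫ a, w a * f a ∂μ‖ₑ ^ p ≤ ∫⁻ a, ENNReal.ofReal (w a) * ‖c - f a‖ₑ ^ p ∂μ := by
  have hsub : c - ∫ a, w a * f a ∂μ = ∫ a, w a * (c - f a) ∂μ := by
    simp_rw [mul_sub]
    rw [integral_sub (hw.mul_const c) hwf, integral_mul_const, hw1, one_mul]
  have hmass : ∫⁻ a, ENNReal.ofReal (w a) ∂μ = 1 := by
    rw [← ofReal_integral_eq_lintegral_ofReal hw (ae_of_all _ hw0), hw1, ENNReal.ofReal_one]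
  calc ‖c - ∫ a, w a * f a ∂μ‖ₑ ^ p
      ≤ (∫⁻ a, ENNReal.ofReal (w a) * ‖c - f a‖ₑ ∂μ) ^ p := by
        gcongr
        rw [hsub]
        refine (enorm_integral_le_lintegral_enorm _).trans_eq (lintegral_congr fun a => ?_)
        rw [enorm_mul, Real.enorm_of_nonneg (hw0 a)]
    _ ≤ ∫⁻ a, ENNReal.ofReal (w a) * ‖c - f a‖ₑ ^ p ∂μ :=
        rpow_lintegral_mul_le_lintegral_mul_rpow hp hw.aemeasurable.ennreal_ofReal
          (aemeasurable_const.sub hf).enorm hmass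

end Jensen

section Convolution

variable {G : Type*} [AddGroup G] [MeasurableSpace G] [MeasurableAdd G] [MeasurableNeg G]
  {μ : Measure G} [μ.IsAddLeftInvariant] [μ.IsNegInvariant]

theorem integrable_sub_left_mul {p : ℝ≥0∞} (hp : 1 ≤ p) {K u : G → ℝ}
    (hK : MemLp K p.conjExponent μ) (hu : MemLp u p μ) (x : G) :
    Integrable (fun y => K (x - y) * u y) μ :=
  have := ENNReal.HolderConjugate.conjExponent hp
  (hK.comp_measurePreserving (Measure.measurePreserving_sub_left μ x)).integrable_mul hu

theorem eLpNorm_sub_conv_rpow_le {p : ℝ} (hp : 1 ≤ p) {K u : G → ℝ} (hK0 : 0 ≤ K)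
    (hK : Integrable K μ) (hKpos : 0 < ∫ z, K z ∂μ)
    (hKu : ∀ x, Integrable (fun y => K (x - y) * u y) μ) (hu : AEMeasurable u μ) :
    eLpNorm (fun x => u x - ∫ y, (K (x - y) / ∫ z, K z ∂μ) * u y ∂μ) (ENNReal.ofReal p) μ ^ p
      ≤ (ENNReal.ofReal (∫ z, K z ∂μ))⁻¹ *
        ∫⁻ x, ∫⁻ y, ENNReal.ofReal (K (x - y)) * ENNReal.ofReal |u x - u y| ^ p ∂μ ∂μ := by
  set m := ∫ z, K z ∂μ
  have hp0 : 0 < p := zero_lt_one.trans_le hp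
  rw [eLpNorm_eq_eLpNorm' (by simpa using hp0) ENNReal.ofReal_ne_top,
    ENNReal.toReal_ofReal hp0.le, ← lintegral_rpow_enorm_eq_rpow_eLpNorm' hp0,
    ← lintegral_const_mul' _ _ (by simpa using hKpos)]
  refine lintegral_mono fun x => ?_
  have hmass : ∫ y, K (x - y) / m ∂μ = 1 := by
    rw [integral_div, integral_sub_left_eq_self K μ x, div_self hKpos.ne']
  calc ‖u x - ∫ y, K (x - y) / m * u y ∂μ‖ₑ ^ p
      ≤ ∫⁻ y, ENNReal.ofReal (K (x - y) / m) * ‖u x - u y‖ₑ ^ p ∂μ :=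
        enorm_sub_integral_mul_rpow_le hp (fun y => div_nonneg (hK0 _) hKpos.le)
          ((hK.comp_sub_left x).div_const m) hmass
          (by simpa only [div_mul_eq_mul_div] using (hKu x).div_const m) hu (u x)
    _ = (ENNReal.ofReal m)⁻¹ *
          ∫⁻ y, ENNReal.ofReal (K (x - y)) * ENNReal.ofReal |u x - u y| ^ p ∂μ := by
        rw [← lintegral_const_mul' _ _ (by simpa using hKpos)]
        refine lintegral_congr fun y => ?_
        rw [div_eq_mul_inv, ENNReal.ofReal_mul (hK0 _), ENNReal.ofReal_inv_of_pos hKpos,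
          Real.enorm_eq_ofReal_abs]
        ring

end Convolution

noncomputable def unitBallVolume (d : ℕ) : ℝ :=
  volume.real (Metric.ball (0 : EuclideanSpace ℝ (Fin d)) 1)

theorem unitBallVolume_pos (d : ℕ) : 0 < unitBallVolume d :=
  ENNReal.toReal_pos (Metric.measure_ball_pos volume 0 one_pos).ne' measure_ball_lt_top.ne

section Kernel

variable {d : ℕ} {h : ℝ}

theorem Kh_nonneg (hh : 0 ≤ h) (x : EuclideanSpace ℝ (Fin d)) : 0 ≤ Kh d h x := by
  unfold Kh; split_ifs <;> positivity

theorem Kh_le (hh : 0 < h) (x : EuclideanSpace ℝ (Fin d)) : Kh d h x ≤ (h ^ d)⁻¹ := by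
  unfold Kh; split_ifs
  · gcongr; exact le_add_of_nonneg_left (norm_nonneg x)
  · positivity

theorem measurable_Kh : Measurable (Kh d h) :=
  Measurable.ite (measurableSet_le (by fun_prop) measurable_const) (by fun_prop) measurable_const

theorem hasCompactSupport_Kh : HasCompactSupport (Kh d h) :=
  HasCompactSupport.intro (isCompact_closedBall 0 1) fun x hx => if_neg (by simpa using hx)

theorem memLp_Kh (hh : 0 < h) (q : ℝ≥0∞) : MemLp (Kh d h) q volume :=
  hasCompactSupport_Kh.memLp_of_bound measurable_Kh.aestronglyMeasurable _ <|
    ae_of_all _ fun x => (Real.norm_of_nonneg (Kh_nonneg hh.le x)).trans_le (Kh_le hh x)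

theorem integrable_Kh (hh : 0 < h) : Integrable (Kh d h) :=
  memLp_one_iff_integrable.1 (memLp_Kh hh 1)

theorem ofReal_integral_Kh (hh : 0 < h) :
    ENNReal.ofReal (∫ x, Kh d h x) = ∫⁻ x, ENNReal.ofReal (Kh d h x) :=
  ofReal_integral_eq_lintegral_ofReal (integrable_Kh hh) (ae_of_all _ (Kh_nonneg hh.le))

theorem integral_Kh_eq (hd : 1 ≤ d) :
    ∫ x, Kh d h x =
      d * unitBallVolume d * ∫ r in Ioc (0 : ℝ) 1, r ^ (d - 1) * ((r + h) ^ d)⁻¹ := by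
  have : Nonempty (Fin d) := ⟨⟨0, hd⟩⟩
  have hprofile : (fun r : ℝ => r ^ (d - 1) • if r ≤ 1 then ((r + h) ^ d)⁻¹ else 0) =
      (Iic 1).indicator fun r => r ^ (d - 1) * ((r + h) ^ d)⁻¹ := by
    ext r; by_cases hr : r ≤ 1 <;> simp [hr]
  have hpolar := integral_fun_norm_addHaar (volume : Measure (EuclideanSpace ℝ (Fin d)))
    fun r => if r ≤ 1 then ((r + h) ^ d)⁻¹ else 0
  rw [finrank_euclideanSpace_fin, hprofile, setIntegral_indicator measurableSet_Iic,
    Ioi_inter_Iic, nsmul_eq_mul, smul_eq_mul, ← mul_assoc] at hpolar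
  exact hpolar

theorem integrableOn_radial (hh : 0 < h) :
    IntegrableOn (fun r : ℝ => r ^ (d - 1) * ((r + h) ^ d)⁻¹) (Ioc 0 1) := by
  refine (ContinuousOn.integrableOn_Icc ?_).mono_set Ioc_subset_Icc_self
  exact (continuous_pow _).continuousOn.mul <|
    ContinuousOn.inv₀ (by fun_prop) fun r hr => (pow_pos (by linarith [hr.1]) d).ne'

theorem integral_radial_le_log (hd : 1 ≤ d) (hh : 0 < h) :
    ∫ r in Ioc (0 : ℝ) 1, r ^ (d - 1) * ((r + h) ^ d)⁻¹ ≤ Real.log ((1 + h) / h) := by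
  have hinv : ∫ r in Ioc (0 : ℝ) 1, (r + h)⁻¹ = Real.log ((1 + h) / h) := by
    rw [← intervalIntegral.integral_of_le zero_le_one,
      intervalIntegral.integral_comp_add_right (fun r => r⁻¹), zero_add,
      integral_inv_of_pos hh (by linarith)]
  refine hinv ▸ setIntegral_mono_on (integrableOn_radial hh) ?_ measurableSet_Ioc fun r hr => ?_
  · refine (ContinuousOn.integrableOn_Icc ?_).mono_set Ioc_subset_Icc_self
    exact ContinuousOn.inv₀ (by fun_prop) fun r hr => by linarith [hr.1]
  · have hrh : 0 < r + h := by linarith [hr.1]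
    calc r ^ (d - 1) * ((r + h) ^ d)⁻¹ = (r / (r + h)) ^ (d - 1) * (r + h)⁻¹ := by
          rw [div_pow, ← pow_sub_one_mul (by omega : d ≠ 0) (r + h)]
          field_simp
      _ ≤ 1 * (r + h)⁻¹ := by
          gcongr
          exact pow_le_one₀ (div_nonneg hr.1.le hrh.le) ((div_le_one hrh).2 (by linarith))
      _ = (r + h)⁻¹ := one_mul _

theorem inv_two_pow_mul_log_le_integral_radial (hd : 1 ≤ d) (hh : 0 < h) (h1 : h ≤ 1) :
    (2 ^ d)⁻¹ * Real.log h⁻¹ ≤ ∫ r in Ioc (0 : ℝ) 1, r ^ (d - 1) * ((r + h) ^ d)⁻¹ := by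
  have hpoint : ∀ r ∈ Ioc h 1, (2 ^ d)⁻¹ * r⁻¹ ≤ r ^ (d - 1) * ((r + h) ^ d)⁻¹ := by
    intro r hr
    have hr0 : 0 < r := hh.trans hr.1
    calc (2 ^ d)⁻¹ * r⁻¹ = r ^ (d - 1) * ((2 * r) ^ d)⁻¹ := by
          rw [mul_pow, ← pow_sub_one_mul (by omega : d ≠ 0) r]
          field_simp
      _ ≤ r ^ (d - 1) * ((r + h) ^ d)⁻¹ := by gcongr; linarith [hr.1]
  calc (2 ^ d)⁻¹ * Real.log h⁻¹ = ∫ r in Ioc h 1, (2 ^ d)⁻¹ * r⁻¹ := by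
        rw [integral_const_mul, ← intervalIntegral.integral_of_le h1,
          integral_inv_of_pos hh one_pos, one_div]
    _ ≤ ∫ r in Ioc h 1, r ^ (d - 1) * ((r + h) ^ d)⁻¹ := by
        refine setIntegral_mono_on ?_ ((integrableOn_radial hh).mono_set
          (Ioc_subset_Ioc_left hh.le)) measurableSet_Ioc hpoint
        refine (ContinuousOn.integrableOn_Icc ?_).mono_set Ioc_subset_Icc_self
        exact continuousOn_const.mul (continuousOn_inv₀.mono fun r hr => (hh.trans_le hr.1).ne')
    _ ≤ ∫ r in Ioc (0 : ℝ) 1, r ^ (d - 1) * ((r + h) ^ d)⁻¹ := by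
        refine setIntegral_mono_set (integrableOn_radial hh) ?_
          (Ioc_subset_Ioc_left hh.le).eventuallyLE
        filter_upwards [ae_restrict_mem measurableSet_Ioc] with r hr
        have := hr.1
        positivity

theorem integral_Kh_bounds (hd : 1 ≤ d) (hh : 0 < h) (hh2 : h < 1 / 2) :
    d * unitBallVolume d / 2 ^ d * |Real.log h| ≤ ∫ x, Kh d h x ∧
      ∫ x, Kh d h x ≤ 2 * d * unitBallVolume d * |Real.log h| := by
  have habs : |Real.log h| = Real.log h⁻¹ := by
    rw [Real.log_inv, abs_of_neg (Real.log_neg hh (by linarith))]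
  have hlog : Real.log ((1 + h) / h) ≤ 2 * Real.log h⁻¹ := by
    calc Real.log ((1 + h) / h) ≤ Real.log (h⁻¹ ^ 2) := by
          refine Real.log_le_log (by positivity) ?_
          rw [inv_pow, div_le_iff₀ hh]
          field_simp
          nlinarith
      _ = 2 * Real.log h⁻¹ := by simp [Real.log_pow]
  have hV := (unitBallVolume_pos d).le
  rw [integral_Kh_eq hd, habs]
  constructor
  · calc _ = d * unitBallVolume d * ((2 ^ d)⁻¹ * Real.log h⁻¹) := by ring
      _ ≤ _ := by gcongr; exact inv_two_pow_mul_log_le_integral_radial hd hh (by linarith)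
  · calc _ ≤ d * unitBallVolume d * (2 * Real.log h⁻¹) := by
          gcongr; exact (integral_radial_le_log hd hh).trans hlog
      _ = _ := by ring

end Kernel

/-- (i) `∫ K_h ≍ |log h|`, and (ii) with `K̃_h = K_h / ‖K_h‖_{L¹}`, for every `u ∈ L^p`,
`‖u − K̃_h ⋆ u‖_{L^p}^p ≤ C |log h|⁻¹ ∫∫ K_h(x−y) |u(x) − u(y)|^p dx dy`. -/
theorem kernel_mass_and_convolution_estimate (d : ℕ) (hd : 1 ≤ d) (p : ℝ) (hp : 1 ≤ p) :
    ∃ c C : ℝ, 0 < c ∧ 0 < C ∧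
      ∀ h : ℝ, h ∈ Set.Ioo (0 : ℝ) (1/2) →
        (ENNReal.ofReal (c * |Real.log h|) ≤ (∫⁻ x, ENNReal.ofReal (Kh d h x)) ∧
         (∫⁻ x, ENNReal.ofReal (Kh d h x)) ≤ ENNReal.ofReal (C * |Real.log h|)) ∧
        ∀ u : EuclideanSpace ℝ (Fin d) → ℝ,
          MemLp u (ENNReal.ofReal p) volume →
          (eLpNorm (fun x => u x -
              ∫ y, (Kh d h (x - y) / ∫ z, Kh d h z) * u y) (ENNReal.ofReal p) volume) ^ p
            ≤ ENNReal.ofReal C * (ENNReal.ofReal |Real.log h|)⁻¹ *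
              ∫⁻ x, ∫⁻ y, ENNReal.ofReal (Kh d h (x - y)) *
                ENNReal.ofReal |u x - u y| ^ p := by
  have hd0 : (0 : ℝ) < d := by exact_mod_cast hd
  have hV := unitBallVolume_pos d
  set c := d * unitBallVolume d / 2 ^ d
  set C := max (2 * d * unitBallVolume d) c⁻¹
  have hc : 0 < c := by positivity
  refine ⟨c, C, hc, (inv_pos.2 hc).trans_le (le_max_right _ _), fun h ⟨hh, hh2⟩ => ?_⟩
  obtain ⟨hlow, hup⟩ := integral_Kh_bounds hd hh hh2
  have hm : 0 < ∫ x, Kh d h x :=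
    (mul_pos hc (abs_pos.2 (Real.log_neg hh (by linarith)).ne)).trans_le hlow
  refine ⟨⟨ofReal_integral_Kh hh ▸ ENNReal.ofReal_le_ofReal hlow, ofReal_integral_Kh hh ▸
    ENNReal.ofReal_le_ofReal (hup.trans (by gcongr; exact le_max_left _ _))⟩, fun u hu => ?_⟩
  refine (eLpNorm_sub_conv_rpow_le hp (Kh_nonneg hh.le) (integrable_Kh hh) hm
    (integrable_sub_left_mul (ENNReal.one_le_ofReal.2 hp) (memLp_Kh hh _) hu)
    hu.aestronglyMeasurable.aemeasurable).trans ?_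
  gcongr
  calc (ENNReal.ofReal (∫ x, Kh d h x))⁻¹ ≤ (ENNReal.ofReal (c * |Real.log h|))⁻¹ := by
        gcongr
    _ = ENNReal.ofReal c⁻¹ * (ENNReal.ofReal |Real.log h|)⁻¹ := by
        rw [ENNReal.ofReal_mul hc.le, ENNReal.mul_inv (by simp [hc]) (by simp),
          ENNReal.ofReal_inv_of_pos hc]
    _ ≤ ENNReal.ofReal C * (ENNReal.ofReal |Real.log h|)⁻¹ := by
        gcongr; exact le_max_right _ _
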